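/- arXiv:2204.08044 — 4 statements merged into one kernel-verified Lean document; each statement's English description precedes it below -/
import Mathlib

section
/- Consider an IDV social choice setting in which every valuation v_i is auto-linear. If a randomized social choice function f : S → Δ(𝒜) is implementable (i.e., some payments p make (f, p) ex-post IC-IR), then the profile v satisfies f-single-crossing. -/
open Finset

noncomputable section

/-- The signal profile lies in the signal space `[0,1]^n`. -/
def InSig {n : ℕ} (s : Fin n → ℝ) : Prop := ∀ i, s i ∈ Set.Icc (0 : ℝ) 1

/-- Expected value `⟨u, d⟩ = ∑ a, d a · u a` of the vector `u` under the distribution `d`. -/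
def expVal {A : Type*} [Fintype A] (u d : A → ℝ) : ℝ := ∑ a, d a * u a

variable {n : ℕ} {A : Type*} [Fintype A]

/-- Valuations are nonnegative and nondecreasing in every signal coordinate. -/
def ValidVals (v : Fin n → A → (Fin n → ℝ) → ℝ) : Prop :=
  (∀ i a (s : Fin n → ℝ), InSig s → 0 ≤ v i a s) ∧
  (∀ i a (j : Fin n) (s : Fin n → ℝ), InSig s → ∀ t t' : ℝ, t ∈ Set.Icc (0 : ℝ) 1 →
    t' ∈ Set.Icc (0 : ℝ) 1 → t ≤ t' →
    v i a (Function.update s j t) ≤ v i a (Function.update s j t'))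

/-- `f` maps every signal profile to a probability distribution over the alternatives. -/
def IsDistr (f : (Fin n → ℝ) → A → ℝ) : Prop :=
  ∀ s : Fin n → ℝ, InSig s → (∀ a, 0 ≤ f s a) ∧ ∑ a, f s a = 1

/-- `v i` is auto-linear: for every alternative and every fixed `s₋ᵢ`, the map
`sᵢ ↦ v i a (sᵢ, s₋ᵢ)` is affine on `[0,1]`. -/
def AutoLinear (v : Fin n → A → (Fin n → ℝ) → ℝ) : Prop :=
  ∀ i a (s : Fin n → ℝ), InSig s → ∃ c d : ℝ,
    ∀ t ∈ Set.Icc (0 : ℝ) 1, v i a (Function.update s i t) = c * t + d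

/-- `dv i a s` is the derivative of `v i a` with respect to agent `i`'s own signal at `s`. -/
def IsOwnDeriv (v dv : Fin n → A → (Fin n → ℝ) → ℝ) : Prop :=
  ∀ i a (s : Fin n → ℝ), InSig s →
    HasDerivWithinAt (fun t => v i a (Function.update s i t)) (dv i a s)
      (Set.Icc (0 : ℝ) 1) (s i)

/-- The mechanism `(f, p)` is ex-post IC-IR. -/
def ExPostICIR (v : Fin n → A → (Fin n → ℝ) → ℝ) (f : (Fin n → ℝ) → A → ℝ)
    (p : Fin n → (Fin n → ℝ) → ℝ) : Prop :=
  ∀ i (s : Fin n → ℝ), InSig s →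
    (∀ b ∈ Set.Icc (0 : ℝ) 1,
      expVal (fun a => v i a s) (f s) - p i s ≥
        expVal (fun a => v i a s) (f (Function.update s i b)) -
          p i (Function.update s i b)) ∧
    expVal (fun a => v i a s) (f s) - p i s ≥ 0

/-- The profile `v` satisfies `f`-single-crossing: for all `i`, `s₋ᵢ` and signals
`sᵢ < z`, `⟨∂vᵢ/∂sᵢ(sᵢ, s₋ᵢ), f(z, s₋ᵢ)⟩ ≥ ⟨∂vᵢ/∂sᵢ(sᵢ, s₋ᵢ), f(sᵢ, s₋ᵢ)⟩`. -/
def FSC (dv : Fin n → A → (Fin n → ℝ) → ℝ) (f : (Fin n → ℝ) → A → ℝ) : Prop :=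
  ∀ i (s : Fin n → ℝ), InSig s → ∀ z ∈ Set.Icc (0 : ℝ) 1, s i < z →
    expVal (fun a => dv i a s) (f (Function.update s i z)) ≥
      expVal (fun a => dv i a s) (f s)

/-!
Incentive compatibility between the true signal `sᵢ` and a higher signal `z` of agent `i`, written
in both directions and added, cancels the payments and leaves the weak monotonicity
`⟨vᵢ(z, s₋ᵢ) - vᵢ(s), f(z, s₋ᵢ)⟩ ≥ ⟨vᵢ(z, s₋ᵢ) - vᵢ(s), f(s)⟩`.
Auto-linearity makes the value increment exactly `(z - sᵢ) · ∂vᵢ/∂sᵢ(s)`, so dividing by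
`z - sᵢ > 0` gives single-crossing.
-/

lemma expVal_sub (u w d : A → ℝ) :
    expVal (fun a => u a - w a) d = expVal u d - expVal w d := by
  simp only [expVal, mul_sub, sum_sub_distrib]

lemma expVal_const_mul (k : ℝ) (u d : A → ℝ) :
    expVal (fun a => k * u a) d = k * expVal u d := by
  simp only [expVal, mul_sum, mul_left_comm]

lemma InSig.update {s : Fin n → ℝ} (hs : InSig s) (i : Fin n) {z : ℝ}
    (hz : z ∈ Set.Icc (0 : ℝ) 1) : InSig (Function.update s i z) := by
  intro j
  rcases eq_or_ne j i with rfl | hji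
  · simpa using hz
  · simpa [Function.update_of_ne hji] using hs j

lemma HasDerivWithinAt.sub_eq_mul_sub_of_eqOn_affine {S : Set ℝ} {g : ℝ → ℝ} {g' c d t z : ℝ}
    (hg : ∀ x ∈ S, g x = c * x + d) (hderiv : HasDerivWithinAt g g' S t)
    (hu : UniqueDiffWithinAt ℝ S t) (ht : t ∈ S) (hz : z ∈ S) :
    g z - g t = g' * (z - t) := by
  have haffine : HasDerivWithinAt g c S t :=
    ((((hasDerivAt_id t).const_mul c).add_const d).hasDerivWithinAt.congr hg (hg t ht)).congr_deriv
      (by simp)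
  rw [hu.eq_deriv S hderiv haffine, hg z hz, hg t ht]
  ring

lemma AutoLinear.sub_eq_ownDeriv_mul {A : Type*} {v dv : Fin n → A → (Fin n → ℝ) → ℝ}
    (hlin : AutoLinear v) (hdv : IsOwnDeriv v dv) {s : Fin n → ℝ} (hs : InSig s) (i : Fin n)
    (a : A) {z : ℝ} (hz : z ∈ Set.Icc (0 : ℝ) 1) :
    v i a (Function.update s i z) - v i a s = (z - s i) * dv i a s := by
  obtain ⟨c, d, hcd⟩ := hlin i a s hs
  have key := (hdv i a s hs).sub_eq_mul_sub_of_eqOn_affine hcd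
    (uniqueDiffOn_Icc zero_lt_one _ (hs i)) (hs i) hz
  rw [Function.update_eq_self] at key
  rw [key, mul_comm]

lemma ExPostICIR.weak_monotone {v : Fin n → A → (Fin n → ℝ) → ℝ} {f : (Fin n → ℝ) → A → ℝ}
    {p : Fin n → (Fin n → ℝ) → ℝ} (hp : ExPostICIR v f p) {s : Fin n → ℝ} (hs : InSig s)
    (i : Fin n) {z : ℝ} (hz : z ∈ Set.Icc (0 : ℝ) 1) :
    expVal (fun a => v i a (Function.update s i z) - v i a s) (f (Function.update s i z)) ≥
      expVal (fun a => v i a (Function.update s i z) - v i a s) (f s) := by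
  have truthful_at_s := (hp i s hs).1 z hz
  have truthful_at_z := (hp i _ (hs.update i hz)).1 (s i) (hs i)
  simp only [Function.update_idem, Function.update_eq_self] at truthful_at_z
  rw [expVal_sub, expVal_sub]
  linarith

theorem autolinear_implementable_implies_fsc_general
    (v dv : Fin n → A → (Fin n → ℝ) → ℝ)
    (f : (Fin n → ℝ) → A → ℝ)
    (hlin : AutoLinear v) (hdv : IsOwnDeriv v dv)
    (himpl : ∃ p : Fin n → (Fin n → ℝ) → ℝ, ExPostICIR v f p) :
    FSC dv f := by
  obtain ⟨p, hp⟩ := himpl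
  intro i s hs z hz hlt
  have hmono := hp.weak_monotone hs i hz
  simp only [hlin.sub_eq_ownDeriv_mul hdv hs i _ hz, expVal_const_mul] at hmono
  exact le_of_mul_le_mul_left hmono (sub_pos.mpr hlt)

/-- With auto-linear valuations, if `f` is implementable (some payments
make `(f, p)` ex-post IC-IR), then the profile `v` satisfies `f`-single-crossing. -/
theorem autolinear_implementable_implies_fsc
    (v dv : Fin n → A → (Fin n → ℝ) → ℝ)
    (f : (Fin n → ℝ) → A → ℝ)
    (hv : ValidVals v) (hlin : AutoLinear v) (hdv : IsOwnDeriv v dv)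
    (hf : IsDistr f)
    (himpl : ∃ p : Fin n → (Fin n → ℝ) → ℝ, ExPostICIR v f p) :
    FSC dv f :=
  autolinear_implementable_implies_fsc_general v dv f hlin hdv himpl
end
end

section
/- Consider an IDV social choice setting in which every valuation v_i is differentiable in its own signal s_i, and let f : S → Δ(𝒜) be a randomized social choice function. If the profile v satisfies weak f-single-crossing, then f satisfies weak monotonicity (W-Mon). -/
open Finset

noncomputable section

variable {n : ℕ} {A : Type*} [Fintype A]

/-- The profile `v` satisfies weak `f`-single-crossing: for all `i`, `s` and `z ∈ Sᵢ`,
`⟨vᵢ(z, s₋ᵢ) − vᵢ(s), f(z, s₋ᵢ)⟩ ≥ ∫_{sᵢ}^{z} ⟨∂vᵢ/∂sᵢ(t, s₋ᵢ), f(t, s₋ᵢ)⟩ dt`. -/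
def WeakFSC (v dv : Fin n → A → (Fin n → ℝ) → ℝ) (f : (Fin n → ℝ) → A → ℝ) : Prop :=
  ∀ i (s : Fin n → ℝ), InSig s → ∀ z ∈ Set.Icc (0 : ℝ) 1,
    expVal (fun a => v i a (Function.update s i z) - v i a s) (f (Function.update s i z)) ≥
      ∫ t in (s i)..z,
        expVal (fun a => dv i a (Function.update s i t)) (f (Function.update s i t))

/-- `f` satisfies weak monotonicity (W-Mon):
`⟨vᵢ(z, s₋ᵢ) − vᵢ(s), f(z, s₋ᵢ) − f(s)⟩ ≥ 0`. -/
def WMon (v : Fin n → A → (Fin n → ℝ) → ℝ) (f : (Fin n → ℝ) → A → ℝ) : Prop :=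
  ∀ i (s : Fin n → ℝ), InSig s → ∀ z ∈ Set.Icc (0 : ℝ) 1,
    expVal (fun a => v i a (Function.update s i z) - v i a s)
      (fun a => f (Function.update s i z) a - f s a) ≥ 0

lemma expVal_sub_left (u u' d : A → ℝ) :
    expVal (fun a => u a - u' a) d = expVal u d - expVal u' d := by
  simp only [expVal, mul_sub, Finset.sum_sub_distrib]

lemma expVal_sub_right (u d d' : A → ℝ) :
    expVal u (fun a => d a - d' a) = expVal u d - expVal u d' := by
  simp only [expVal, sub_mul, Finset.sum_sub_distrib]

theorem weak_fsc_implies_wmon_general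
    (v dv : Fin n → A → (Fin n → ℝ) → ℝ)
    (f : (Fin n → ℝ) → A → ℝ)
    (hwfsc : WeakFSC v dv f) :
    WMon v f := by
  intro i s hs z hz
  have forward := hwfsc i s hs z hz
  have backward := hwfsc i (Function.update s i z) (hs.update i hz) (s i) (hs i)
  simp only [Function.update_idem, Function.update_eq_self, Function.update_self] at backward
  rw [intervalIntegral.integral_symm] at backward
  rw [expVal_sub_left] at forward backward
  rw [expVal_sub_right, expVal_sub_left, expVal_sub_left]
  linarith

/-- If the profile `v` satisfies weak `f`-single-crossing, then `f`
satisfies weak monotonicity (W-Mon). -/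
theorem weak_fsc_implies_wmon
    (v dv : Fin n → A → (Fin n → ℝ) → ℝ)
    (f : (Fin n → ℝ) → A → ℝ)
    (hv : ValidVals v) (hdv : IsOwnDeriv v dv) (hf : IsDistr f)
    (hwfsc : WeakFSC v dv f) :
    WMon v f :=
  weak_fsc_implies_wmon_general v dv f hwfsc
end
end

section
/- Let 𝒜 be a finite nonempty set, let S = [0,1], and let v : 𝒜 × S → ℝ≥0 be such that for every a ∈ 𝒜 the map s ↦ v(a; s) is continuous and nondecreasing. Suppose the closure of the induced value curve D = {(v(a; s))_{a∈𝒜} : s ∈ S} ⊆ ℝ^𝒜 is convex. Then for every two signals s < s' in S and every t ∈ [s, s'], there exists λ ∈ [0,1] such that v(a; t) = (1 − λ)·v(a; s) + λ·v(a; s') for every a ∈ 𝒜. -/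
/-!
The curve `D` is a continuous image of `[0,1]`, hence compact and equal to its closure, so
convexity puts the whole segment between `v(s)` and `v(s')` inside `D`. The coordinate sum is
linear, so some point `v(u)` of that segment has the same coordinate sum as `v(t)`. Since `u` and
`t` are comparable and every coordinate is monotone, equal sums force `v(u) = v(t)`.
-/

open Finset

lemma eq_of_monotoneOn_of_sum_eq {ι α M : Type*} [Fintype ι] [LinearOrder α]
    [AddCommMonoid M] [PartialOrder M] [IsOrderedCancelAddMonoid M]
    {s : Set α} {f : ι → α → M} (hf : ∀ i, MonotoneOn (f i) s) {x y : α}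
    (hx : x ∈ s) (hy : y ∈ s) (h : ∑ i, f i x = ∑ i, f i y) (i : ι) :
    f i x = f i y := by
  rcases le_total x y with hxy | hyx
  · exact (sum_eq_sum_iff_of_le fun j _ => hf j hx hy hxy).1 h i (mem_univ i)
  · exact ((sum_eq_sum_iff_of_le fun j _ => hf j hy hx hyx).1 h.symm i (mem_univ i)).symm

lemma isCompact_setOf_exists_mem_Icc_eq {E : Type*} [TopologicalSpace E] {f : ℝ → E}
    {a b : ℝ} (hf : ContinuousOn f (Set.Icc a b)) :
    IsCompact {x | ∃ s ∈ Set.Icc a b, x = f s} := by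
  convert isCompact_Icc.image_of_continuousOn hf using 1
  ext x
  exact exists_congr fun s => and_congr_right fun _ => eq_comm

lemma exists_mem_segment_apply_eq {E : Type*} [AddCommGroup E] [Module ℝ E]
    (φ : E →ₗ[ℝ] ℝ) {x y : E} {q : ℝ} (hq : q ∈ Set.Icc (φ x) (φ y)) :
    ∃ z ∈ segment ℝ x y, φ z = q := by
  have : q ∈ φ.toAffineMap '' segment ℝ x y := by
    rwa [image_segment, LinearMap.coe_toAffineMap, segment_eq_Icc (hq.1.trans hq.2)]
  simpa using this

theorem convex_closure_interpolation_general
    {A : Type*} [Fintype A]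
    (v : A → ℝ → ℝ)
    (hcont : ∀ a, ContinuousOn (v a) (Set.Icc 0 1))
    (hmono : ∀ a, MonotoneOn (v a) (Set.Icc 0 1))
    (hconv : Convex ℝ
      (closure {x : A → ℝ | ∃ s ∈ Set.Icc (0 : ℝ) 1, x = fun a => v a s})) :
    ∀ s ∈ Set.Icc (0 : ℝ) 1, ∀ s' ∈ Set.Icc (0 : ℝ) 1, s < s' →
      ∀ t ∈ Set.Icc s s', ∃ l ∈ Set.Icc (0 : ℝ) 1,
        ∀ a, v a t = (1 - l) * v a s + l * v a s' := by
  intro s hs s' hs' _ t ht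
  have ht01 : t ∈ Set.Icc (0 : ℝ) 1 := ⟨hs.1.trans ht.1, ht.2.trans hs'.2⟩
  let σ : (A → ℝ) →ₗ[ℝ] ℝ := ∑ a, LinearMap.proj a
  have hσ (x : A → ℝ) : σ x = ∑ a, x a := by simp [σ]
  obtain ⟨z, hz, hσz⟩ := exists_mem_segment_apply_eq σ (q := σ fun a => v a t)
    ⟨by simpa only [hσ] using sum_le_sum fun a _ => hmono a hs ht01 ht.1,
     by simpa only [hσ] using sum_le_sum fun a _ => hmono a ht01 hs' ht.2⟩
  obtain ⟨u, hu, rfl⟩ := (isCompact_setOf_exists_mem_Icc_eq (continuousOn_pi.2 hcont)).isClosed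
    |>.closure_subset <| hconv.segment_subset (subset_closure ⟨s, hs, rfl⟩)
      (subset_closure ⟨s', hs', rfl⟩) hz
  rw [segment_eq_image] at hz
  obtain ⟨l, hl, hlu⟩ := hz
  refine ⟨l, hl, fun a => ?_⟩
  rw [← eq_of_monotoneOn_of_sum_eq hmono hu ht01 (by simpa only [hσ] using hσz)]
  simpa using (congrFun hlu a).symm

/-- For a single agent with signal space `S = [0,1]` and a continuous,
nondecreasing, nonnegative valuation `v : 𝒜 × S → ℝ≥0`, if the closure of the induced
value curve `D = {(v(a; s))_{a ∈ 𝒜} : s ∈ S} ⊆ ℝ^𝒜` is convex, then for all signals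
`s < s'` in `S` and every `t ∈ [s, s']` there is `λ ∈ [0,1]` with
`v(a; t) = (1 − λ)·v(a; s) + λ·v(a; s')` for every `a`. -/
theorem convex_closure_interpolation
    {A : Type*} [Fintype A] [Nonempty A]
    (v : A → ℝ → ℝ)
    (hcont : ∀ a, ContinuousOn (v a) (Set.Icc 0 1))
    (hmono : ∀ a, MonotoneOn (v a) (Set.Icc 0 1))
    (hnn : ∀ a, ∀ s ∈ Set.Icc (0 : ℝ) 1, 0 ≤ v a s)
    (hconv : Convex ℝ
      (closure {x : A → ℝ | ∃ s ∈ Set.Icc (0 : ℝ) 1, x = fun a => v a s})) :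
    ∀ s ∈ Set.Icc (0 : ℝ) 1, ∀ s' ∈ Set.Icc (0 : ℝ) 1, s < s' →
      ∀ t ∈ Set.Icc s s', ∃ l ∈ Set.Icc (0 : ℝ) 1,
        ∀ a, v a t = (1 - l) * v a s + l * v a s' :=
  convex_closure_interpolation_general v hcont hmono hconv
end

section
/- Fix n agents with signal spaces S_i = [0,1], a finite nonempty set 𝒜 of alternatives, and separable valuations v_i(a; s) = h_i(a; s_i) + g_{-i}(a; s_{-i}) with h_i, g_{-i} ≥ 0 and nondecreasing. Fix a subset A ⊆ [n]. For i ∉ A define the surrogate w_i(a; s_i, s_A) = v_i(a; s') where s' agrees with s on {i} ∪ A and is 0 on all other coordinates. Let a* : S → 𝒜 be any selection satisfying a*(s) ∈ argmax_{a∈𝒜} Σ_{i∉A} w_i(a; s_i, s_A) for every s, and define, for i ∉ A, the payment p_i(s) = (g_{-i}(a*(s); s_{-i}) − g_{-i}(a*(s); s'') ) − Σ_{i'∉A∪{i}} w_{i'}(a*(s); s_{i'}, s_A) + max_{a∈𝒜} Σ_{i'∉A∪{i}} w_{i'}(a; s_{i'}, s_A), where s'' agrees with s_{-i} on A and is 0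 on all coordinates of [n]∖(A∪{i}); agents i ∈ A receive value 0 and pay 0. Then this A-exclusion-VCG mechanism is ex-post IC-IR: for every agent i ∉ A, every true signal profile s and every report b_i ∈ S_i, v_i(a*(s); s) − p_i(s) ≥ v_i(a*(b_i, s_{-i}); s) − p_i(b_i, s_{-i}) and v_i(a*(s); s) − p_i(s) ≥ 0, and every agent i ∈ A is trivially truthful since her utility is 0 for every report. -/
open Finset

noncomputable section

variable {n : ℕ} {Alt : Type*} [Fintype Alt] [Nonempty Alt]

/-- The separable valuation `v i a s = h i a (s i) + g i a s` (where `g i a` depends only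
on the signals of the agents other than `i`). -/
def sepV (h : Fin n → Alt → ℝ → ℝ) (g : Fin n → Alt → (Fin n → ℝ) → ℝ)
    (i : Fin n) (a : Alt) (s : Fin n → ℝ) : ℝ :=
  h i a (s i) + g i a s

/-- `maskS A i s` agrees with `s` on `{i} ∪ A` and is `0` on all other coordinates. -/
def maskS (A : Finset (Fin n)) (i : Fin n) (s : Fin n → ℝ) : Fin n → ℝ :=
  fun j => if j = i ∨ j ∈ A then s j else 0

/-- The surrogate valuation `w_i(a; s_i, s_A) = v_i(a; s')` where `s'` agrees with `s` on
`{i} ∪ A` and is `0` elsewhere. -/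
def surW (h : Fin n → Alt → ℝ → ℝ) (g : Fin n → Alt → (Fin n → ℝ) → ℝ)
    (A : Finset (Fin n)) (i : Fin n) (a : Alt) (s : Fin n → ℝ) : ℝ :=
  sepV h g i a (maskS A i s)

/-- The `A`-exclusion-VCG payment of agent `i ∉ A`. -/
def exclPay (h : Fin n → Alt → ℝ → ℝ) (g : Fin n → Alt → (Fin n → ℝ) → ℝ)
    (A : Finset (Fin n)) (astar : (Fin n → ℝ) → Alt) (i : Fin n) (s : Fin n → ℝ) : ℝ :=
  (g i (astar s) s - g i (astar s) (maskS A i s)) -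
    ∑ i' ∈ Aᶜ.erase i, surW h g A i' (astar s) s +
    Finset.univ.sup' Finset.univ_nonempty
      (fun a : Alt => ∑ i' ∈ Aᶜ.erase i, surW h g A i' a s)

/-- The value of agent `i` in the `A`-exclusion-VCG mechanism: excluded agents obtain
value `0` from the chosen project. -/
def exclVal (h : Fin n → Alt → ℝ → ℝ) (g : Fin n → Alt → (Fin n → ℝ) → ℝ)
    (A : Finset (Fin n)) (i : Fin n) (a : Alt) (s : Fin n → ℝ) : ℝ :=
  if i ∈ A then 0 else sepV h g i a s

/-- The payment of agent `i` in the `A`-exclusion-VCG mechanism: excluded agents pay `0`. -/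
def exclPay' (h : Fin n → Alt → ℝ → ℝ) (g : Fin n → Alt → (Fin n → ℝ) → ℝ)
    (A : Finset (Fin n)) (astar : (Fin n → ℝ) → Alt) (i : Fin n) (s : Fin n → ℝ) : ℝ :=
  if i ∈ A then 0 else exclPay h g A astar i s

/-! For an agent `i ∉ A`, a report `b` leaves the other surrogates `w_{i'}` untouched (they
read only the coordinates in `{i'} ∪ A`), and since `g_{-i}` ignores `s_i`, the payment's
correction term turns her true value `v_i(a; s)` into `w_i(a; s_i, s_A)`. So her utility from
reporting `b` is the surrogate welfare `∑_{i' ∉ A} w_{i'}(a*(b, s_{-i}); s)` minus the others'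
best surrogate welfare, which does not depend on `b`: truthfulness is the VCG argument, as
truthful reporting makes `a*` maximise exactly that welfare. Individual rationality follows
because `w_i ≥ 0` puts the others' best welfare below the full welfare at `a*(s)`. -/

section Masking

variable (A : Finset (Fin n)) (s : Fin n → ℝ)

theorem maskS_update_self (i : Fin n) (b : ℝ) :
    maskS A i (Function.update s i b) = Function.update (maskS A i s) i b := by
  funext j
  by_cases hj : j = i
  · subst hj
    simp [maskS]
  · simp [maskS, hj]

variable {A}

theorem maskS_update_of_ne {i i' : Fin n} (hiA : i ∉ A) (hne : i ≠ i') (b : ℝ) :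
    maskS A i' (Function.update s i b) = maskS A i' s := by
  funext j
  by_cases hj : j = i
  · subst hj
    simp [maskS, hne, hiA]
  · simp [maskS, Function.update_of_ne hj]

variable {s}

theorem InSig.maskS (hs : InSig s) (A : Finset (Fin n)) (i : Fin n) : InSig (maskS A i s) := by
  intro j
  unfold _root_.maskS
  split_ifs
  · exact hs j
  · exact ⟨le_rfl, zero_le_one⟩

end Masking

section Surrogate

variable {α : Type*} (h : Fin n → α → ℝ → ℝ) (g : Fin n → α → (Fin n → ℝ) → ℝ)

theorem surW_eq (A : Finset (Fin n)) (i : Fin n) (a : α) (s : Fin n → ℝ) :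
    surW h g A i a s = h i a (s i) + g i a (maskS A i s) := by
  simp [surW, sepV, maskS]

theorem surW_nonneg (hh0 : ∀ i a, ∀ t ∈ Set.Icc (0 : ℝ) 1, 0 ≤ h i a t)
    (hg0 : ∀ i a (s : Fin n → ℝ), InSig s → 0 ≤ g i a s) {s : Fin n → ℝ} (hs : InSig s)
    (A : Finset (Fin n)) (i : Fin n) (a : α) : 0 ≤ surW h g A i a s :=
  (surW_eq h g A i a s).symm ▸ add_nonneg (hh0 i a _ (hs i)) (hg0 i a _ (hs.maskS A i))

theorem sum_surW_erase_update_self {A : Finset (Fin n)} {i : Fin n} (hiA : i ∉ A) (a : α)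
    (s : Fin n → ℝ) (b : ℝ) :
    ∑ i' ∈ Aᶜ.erase i, surW h g A i' a (Function.update s i b) =
      ∑ i' ∈ Aᶜ.erase i, surW h g A i' a s :=
  sum_congr rfl fun _ hi' ↦ by
    rw [surW, surW, maskS_update_of_ne s hiA (ne_of_mem_erase hi').symm]

end Surrogate

section Utility

variable (h : Fin n → Alt → ℝ → ℝ) (g : Fin n → Alt → (Fin n → ℝ) → ℝ)
  {A : Finset (Fin n)}

theorem exclVal_sub_exclPay'_update
    (hgind : ∀ i a (s : Fin n → ℝ), ∀ t : ℝ, g i a (Function.update s i t) = g i a s)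
    (astar : (Fin n → ℝ) → Alt) {i : Fin n} (hiA : i ∉ A) (s : Fin n → ℝ) (b : ℝ) :
    exclVal h g A i (astar (Function.update s i b)) s -
        exclPay' h g A astar i (Function.update s i b) =
      ∑ i' ∈ Aᶜ, surW h g A i' (astar (Function.update s i b)) s -
        univ.sup' univ_nonempty (fun a ↦ ∑ i' ∈ Aᶜ.erase i, surW h g A i' a s) := by
  simp only [exclVal, exclPay', exclPay, if_neg hiA, sepV, hgind, maskS_update_self,
    sum_surW_erase_update_self h g hiA]
  rw [← add_sum_erase Aᶜ _ (mem_compl.mpr hiA), surW_eq]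
  ring

theorem sup'_sum_surW_erase_le (hh0 : ∀ i a, ∀ t ∈ Set.Icc (0 : ℝ) 1, 0 ≤ h i a t)
    (hg0 : ∀ i a (s : Fin n → ℝ), InSig s → 0 ≤ g i a s) {astar : (Fin n → ℝ) → Alt}
    {s : Fin n → ℝ} (hs : InSig s)
    (hastar : ∀ a : Alt, ∑ i ∈ Aᶜ, surW h g A i a s ≤ ∑ i ∈ Aᶜ, surW h g A i (astar s) s)
    (i : Fin n) :
    univ.sup' univ_nonempty (fun a ↦ ∑ i' ∈ Aᶜ.erase i, surW h g A i' a s) ≤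
      ∑ i' ∈ Aᶜ, surW h g A i' (astar s) s :=
  sup'_le _ _ fun a _ ↦
    (sum_le_sum_of_subset_of_nonneg (erase_subset i Aᶜ) fun i' _ _ ↦
      surW_nonneg h g hh0 hg0 hs A i' a).trans (hastar a)

end Utility

theorem A_exclusion_VCG_truthful_general
    (h : Fin n → Alt → ℝ → ℝ) (g : Fin n → Alt → (Fin n → ℝ) → ℝ)
    (hh0 : ∀ i a, ∀ t ∈ Set.Icc (0 : ℝ) 1, 0 ≤ h i a t)
    (hg0 : ∀ i a (s : Fin n → ℝ), InSig s → 0 ≤ g i a s)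
    (hgind : ∀ i a (s : Fin n → ℝ), ∀ t : ℝ, g i a (Function.update s i t) = g i a s)
    (A : Finset (Fin n))
    (astar : (Fin n → ℝ) → Alt)
    (hastar : ∀ s : Fin n → ℝ, InSig s → ∀ a : Alt,
      ∑ i ∈ Aᶜ, surW h g A i a s ≤ ∑ i ∈ Aᶜ, surW h g A i (astar s) s) :
    ∀ (i : Fin n) (s : Fin n → ℝ), InSig s →
      (∀ b ∈ Set.Icc (0 : ℝ) 1,
        exclVal h g A i (astar s) s - exclPay' h g A astar i s ≥
          exclVal h g A i (astar (Function.update s i b)) s -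
            exclPay' h g A astar i (Function.update s i b)) ∧
      exclVal h g A i (astar s) s - exclPay' h g A astar i s ≥ 0 := by
  intro i s hs
  by_cases hiA : i ∈ A
  · simp [exclVal, exclPay', hiA]
  have utility := exclVal_sub_exclPay'_update h g hgind astar hiA s
  have truthful := utility (s i)
  rw [Function.update_eq_self] at truthful
  refine ⟨fun b _ ↦ ?_, ?_⟩
  · rw [truthful, utility b]
    linarith [hastar s hs (astar (Function.update s i b))]
  · rw [truthful]
    linarith [sup'_sum_surW_erase_le h g hh0 hg0 hs (hastar s hs) i]

/-- The `A`-exclusion-VCG mechanism for separable valuations is ex-post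
IC-IR: non-excluded agents are truthful and individually rational, and excluded agents
(whose value and payment are `0`) are trivially truthful. -/
theorem A_exclusion_VCG_truthful
    (h : Fin n → Alt → ℝ → ℝ) (g : Fin n → Alt → (Fin n → ℝ) → ℝ)
    (hh0 : ∀ i a, ∀ t ∈ Set.Icc (0 : ℝ) 1, 0 ≤ h i a t)
    (hhmono : ∀ i a, MonotoneOn (h i a) (Set.Icc 0 1))
    (hg0 : ∀ i a (s : Fin n → ℝ), InSig s → 0 ≤ g i a s)
    (hgmono : ∀ i a (j : Fin n) (s : Fin n → ℝ), InSig s → ∀ t t' : ℝ,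
      t ∈ Set.Icc (0 : ℝ) 1 → t' ∈ Set.Icc (0 : ℝ) 1 → t ≤ t' →
      g i a (Function.update s j t) ≤ g i a (Function.update s j t'))
    (hgind : ∀ i a (s : Fin n → ℝ), ∀ t : ℝ, g i a (Function.update s i t) = g i a s)
    (A : Finset (Fin n))
    (astar : (Fin n → ℝ) → Alt)
    (hastar : ∀ s : Fin n → ℝ, InSig s → ∀ a : Alt,
      ∑ i ∈ Aᶜ, surW h g A i a s ≤ ∑ i ∈ Aᶜ, surW h g A i (astar s) s) :
    ∀ (i : Fin n) (s : Fin n → ℝ), InSig s →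
      (∀ b ∈ Set.Icc (0 : ℝ) 1,
        exclVal h g A i (astar s) s - exclPay' h g A astar i s ≥
          exclVal h g A i (astar (Function.update s i b)) s -
            exclPay' h g A astar i (Function.update s i b)) ∧
      exclVal h g A i (astar s) s - exclPay' h g A astar i s ≥ 0 :=
  A_exclusion_VCG_truthful_general h g hh0 hg0 hgind A astar hastar
end
end
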